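/- Let m ≥ 3 and let A ≥ 0, B be integers with 14A + 7B - B² ≥ 0 and such that 14A + 7B - B² ≠ 2·4^l(8k+7) for all nonnegative integers l, k. Then there exist integers x₁, x₂, x₃, x₄ with P_m(x₁) + 2P_m(x₂) + 2P_m(x₃) + 2P_m(x₄) = A(m-2) + B. -/

import Mathlib

/-- The generalized `m`-gonal number `P_m(x) = ((m-2)x² - (m-4)x)/2`. -/
def polygonal (m x : ℤ) : ℤ := ((m - 2) * x ^ 2 - (m - 4) * x) / 2

/-!
Put `n = 8A + 7` and `t = 2B - 7`, so that `7n - t² = 4(14A + 7B - B²)`. Since `n ≡ 7 (mod 8)`,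
every solution of `y₁² + 2y₂² + 2y₃² + 2y₄² = n` has all `yᵢ` odd, and `yᵢ = 2xᵢ - 1` turns a
solution with `y₁ + 2y₂ + 2y₃ + 2y₄ = t` into the required representation by `m`-gonal numbers.
Such a `y` is found by splitting off its component along `(1, 1, 1, 1)`: the complement is
parametrised by `(a, b, c) ↦ (2a + c, -a + 2b, -b - 2c)`, which scales the sum of three squares
by `7`, so it suffices to write `2(14A + 7B - B²)` as a sum of three squares and to permute and
change the signs of the three squares so that the divisions by `7` come out integral.

The sum of three squares is provided by Legendre's theorem, proved in the classical way:
Dirichlet's theorem gives `D` and a prime `p` with `nD - 1 ∈ {p, 2p}` and `-D` a square modulo `p`,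
which yields a positive definite integral ternary form of determinant `1` representing `n`, and
Hermite's reduction shows that every such form is equivalent to `x² + y² + z²`.
-/

theorem Int.exists_four_mul_sq_sub_mul_le (a b : ℤ) (ha : 0 < a) :
    ∃ k : ℤ, 4 * (b - k * a) ^ 2 ≤ a ^ 2 := by
  refine ⟨(2 * b + a) / (2 * a), ?_⟩
  have hdiv := Int.mul_ediv_add_emod (2 * b + a) (2 * a)
  have h0 := Int.emod_nonneg (2 * b + a) (by omega : 2 * a ≠ 0)
  have h1 := Int.emod_lt_of_pos (2 * b + a) (by omega : 0 < 2 * a)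
  nlinarith

namespace Matrix

section Conj

variable {n R : Type*} [Fintype n] [CommRing R] {Q U : Matrix n n R}

theorem IsSymm.transpose_mul_mul (hQ : Q.IsSymm) (U : Matrix n n R) : (Uᵀ * Q * U).IsSymm := by
  simp [IsSymm, transpose_mul, hQ.eq, Matrix.mul_assoc]

variable [DecidableEq n]

theorem det_transpose_mul_mul_of_det_eq_one (hU : U.det = 1) : (Uᵀ * Q * U).det = Q.det := by
  simp [det_mul, hU]

theorem PosDef.transpose_mul_mul_of_det_eq_one [PartialOrder R] [StarRing R] [TrivialStar R]
    (hQ : Q.PosDef) (hU : U.det = 1) :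
    (Uᵀ * Q * U).PosDef := by
  have hinj : Function.Injective U.mulVec :=
    mulVec_injective_of_isUnit ((isUnit_iff_isUnit_det U).2 (by simp [hU]))
  simpa [conjTranspose_eq_transpose_of_trivial] using hQ.conjTranspose_mul_mul_same hinj

theorem exists_eq_transpose_mul_self_of_transpose_mul_mul {P : Matrix n n R} (hU : U.det = 1)
    (h : Uᵀ * Q * U = Pᵀ * P) : ∃ P' : Matrix n n R, Q = P'ᵀ * P' := by
  have hU' : IsUnit U.det := by simp [hU]
  refine ⟨P * U⁻¹, ?_⟩
  calc Q = (U * U⁻¹)ᵀ * Q * (U * U⁻¹) := by simp [mul_nonsing_inv _ hU']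
    _ = (U⁻¹)ᵀ * (Uᵀ * Q * U) * U⁻¹ := by simp only [transpose_mul, Matrix.mul_assoc]
    _ = (P * U⁻¹)ᵀ * (P * U⁻¹) := by rw [h]; simp only [transpose_mul, Matrix.mul_assoc]

end Conj

theorem IsSymm.exists_eq_fin_two {R : Type*} {Q : Matrix (Fin 2) (Fin 2) R} (hQ : Q.IsSymm) :
    ∃ a b c : R, Q = !![a, b; b, c] :=
  ⟨Q 0 0, Q 0 1, Q 1 1, by
    conv_lhs => rw [eta_fin_two Q]
    rw [hQ.apply 0 1]⟩

theorem IsSymm.exists_eq_fin_three {R : Type*} {Q : Matrix (Fin 3) (Fin 3) R} (hQ : Q.IsSymm) :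
    ∃ a b c d e f : R, Q = !![a, d, e; d, b, f; e, f, c] :=
  ⟨Q 0 0, Q 1 1, Q 2 2, Q 0 1, Q 0 2, Q 1 2, by
    conv_lhs => rw [eta_fin_three Q]
    rw [hQ.apply 0 1, hQ.apply 0 2, hQ.apply 1 2]⟩

section FinTwo

variable {Q : Matrix (Fin 2) (Fin 2) ℤ}

theorem exists_mul_transpose_mul_mul_apply_zero_zero_eq_det_add_sq (hQ : Q.IsSymm)
    (ha : 0 < Q 0 0) :
    ∃ (U : Matrix (Fin 2) (Fin 2) ℤ) (s : ℤ), U.det = 1 ∧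
      Q 0 0 * (Uᵀ * Q * U) 0 0 = Q.det + s ^ 2 ∧ 4 * s ^ 2 ≤ Q 0 0 ^ 2 := by
  obtain ⟨a, b, c, rfl⟩ := hQ.exists_eq_fin_two
  obtain ⟨k, hk⟩ := Int.exists_four_mul_sq_sub_mul_le a b (by simpa using ha)
  refine ⟨!![k, 1; -1, 0], b - k * a, by simp [det_fin_two], ?_, by simpa using hk⟩
  simp [det_fin_two, Matrix.mul_apply, Fin.sum_univ_two]
  ring

theorem exists_eq_transpose_mul_self_fin_two (hQ : Q.IsSymm) (ha : 0 < Q 0 0)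
    (hdet : Q.det = 1) : ∃ P : Matrix (Fin 2) (Fin 2) ℤ, Q = Pᵀ * P := by
  induction hN : (Q 0 0).toNat using Nat.strong_induction_on generalizing Q with
  | _ N ih =>
  obtain ha1 | ha2 := (show Q 0 0 = 1 ∨ 2 ≤ Q 0 0 by omega)
  · obtain ⟨a, b, c, rfl⟩ := hQ.exists_eq_fin_two
    simp only [of_apply, cons_val', cons_val_zero, cons_val_fin_one, det_fin_two_of] at ha1 hdet
    subst ha1
    refine ⟨!![1, b; 0, 1], ?_⟩
    ext i j
    fin_cases i <;> fin_cases j <;> simp [Matrix.mul_apply, Fin.sum_univ_two]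
    linarith
  · obtain ⟨U, s, hU, hmul, hs⟩ := exists_mul_transpose_mul_mul_apply_zero_zero_eq_det_add_sq hQ ha
    rw [hdet] at hmul
    have hpos : 0 < (Uᵀ * Q * U) 0 0 := by nlinarith
    have hlt : (Uᵀ * Q * U) 0 0 < Q 0 0 := by nlinarith
    obtain ⟨P, hP⟩ := ih _ (by omega) (hQ.transpose_mul_mul U) hpos
      (by rw [det_transpose_mul_mul_of_det_eq_one hU, hdet]) rfl
    exact exists_eq_transpose_mul_self_of_transpose_mul_mul hU hP

theorem exists_three_mul_sq_le_four_mul_det_fin_two (hQ : Q.IsSymm) (ha : 0 < Q 0 0)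
    (hdet : 0 < Q.det) : ∃ U : Matrix (Fin 2) (Fin 2) ℤ, U.det = 1 ∧
      0 < (Uᵀ * Q * U) 0 0 ∧ 3 * (Uᵀ * Q * U) 0 0 ^ 2 ≤ 4 * Q.det := by
  induction hN : (Q 0 0).toNat using Nat.strong_induction_on generalizing Q with
  | _ N ih =>
  obtain ⟨U, s, hU, hmul, hs⟩ := exists_mul_transpose_mul_mul_apply_zero_zero_eq_det_add_sq hQ ha
  have hpos : 0 < (Uᵀ * Q * U) 0 0 := by nlinarith
  obtain hle | hlt := le_or_gt (Q 0 0) ((Uᵀ * Q * U) 0 0)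
  · exact ⟨1, by simp, by simpa using ha, by simp; nlinarith⟩
  · obtain ⟨V, hV, hVpos, hVle⟩ := ih _ (by omega) (hQ.transpose_mul_mul U) hpos
      (by rwa [det_transpose_mul_mul_of_det_eq_one hU]) rfl
    refine ⟨U * V, by simp [hU, hV], ?_⟩
    rw [det_transpose_mul_mul_of_det_eq_one hU] at hVle
    simpa only [transpose_mul, Matrix.mul_assoc] using And.intro hVpos hVle

end FinTwo

section FinThree

variable {Q : Matrix (Fin 3) (Fin 3) ℤ}

theorem posDef_fin_three_of_minors (hQ : Q.IsSymm) (h₁ : 0 < Q 0 0)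
    (h₂ : 0 < Q 0 0 * Q 1 1 - Q 0 1 ^ 2) (h₃ : 0 < Q.det) : Q.PosDef := by
  obtain ⟨a, b, c, d, e, f, rfl⟩ := hQ.exists_eq_fin_three
  simp only [of_apply, cons_val', cons_val_zero, cons_val_one, cons_val_fin_one] at h₁ h₂
  refine PosDef.of_dotProduct_mulVec_pos (isHermitian_iff_isSymm.2 hQ) fun v hv => ?_
  set δ := a * b - d ^ 2
  set D := (!![a, d, e; d, b, f; e, f, c]).det
  set q := star v ⬝ᵥ (!![a, d, e; d, b, f; e, f, c] *ᵥ v)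
  have key : δ * a * q = δ * (a * v 0 + d * v 1 + e * v 2) ^ 2
      + (δ * v 1 + (a * f - d * e) * v 2) ^ 2 + a * D * v 2 ^ 2 := by
    simp only [q, δ, D, det_fin_three, dotProduct, mulVec, Fin.sum_univ_three]
    simp
    ring
  have hsum : 0 < δ * (a * v 0 + d * v 1 + e * v 2) ^ 2
      + (δ * v 1 + (a * f - d * e) * v 2) ^ 2 + a * D * v 2 ^ 2 := by
    by_cases h2 : v 2 = 0
    · by_cases h1 : v 1 = 0
      · have h0 : v 0 ≠ 0 := fun h0 => hv (by ext i; fin_cases i <;> simp [h0, h1, h2])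
        simp only [h1, h2]
        have : 0 < (a * v 0) ^ 2 := by positivity
        nlinarith
      · simp only [h2]
        have : 0 < (δ * v 1) ^ 2 := by positivity
        nlinarith [sq_nonneg (a * v 0 + d * v 1)]
    · have : 0 < a * D * v 2 ^ 2 := by positivity
      nlinarith [sq_nonneg (a * v 0 + d * v 1 + e * v 2),
        sq_nonneg (δ * v 1 + (a * f - d * e) * v 2)]
  have : 0 < δ * a * q := key ▸ hsum
  exact pos_of_mul_pos_right this (by positivity)

theorem exists_eq_transpose_mul_self_fin_three_of_apply_zero_zero_eq_one (hQ : Q.PosDef)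
    (hdet : Q.det = 1) (ha : Q 0 0 = 1) : ∃ P : Matrix (Fin 3) (Fin 3) ℤ, Q = Pᵀ * P := by
  obtain ⟨a, b, c, d, e, f, rfl⟩ := (isHermitian_iff_isSymm.1 hQ.isHermitian).exists_eq_fin_three
  simp only [of_apply, cons_val', cons_val_zero, cons_val_fin_one] at ha
  subst ha
  have hpos : 0 < b - d ^ 2 := by
    have h := hQ.dotProduct_mulVec_pos (x := ![-d, 1, 0]) (by simp)
    simp [dotProduct, mulVec, Fin.sum_univ_three] at h
    nlinarith
  have hS : (!![b - d ^ 2, f - d * e; f - d * e, c - e ^ 2]).IsSymm := by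
    ext i j; fin_cases i <;> fin_cases j <;> rfl
  obtain ⟨C, hC⟩ := exists_eq_transpose_mul_self_fin_two hS (by simpa using hpos) (by
    simp [det_fin_two, det_fin_three] at hdet ⊢
    linear_combination hdet)
  have hC' := fun i j => congrFun (congrFun hC i) j
  simp only [Matrix.mul_apply, Fin.sum_univ_two, transpose_apply] at hC'
  have h₀₀ := hC' 0 0
  have h₀₁ := hC' 0 1
  have h₁₁ := hC' 1 1
  simp only [of_apply, cons_val', cons_val_zero, cons_val_one, cons_val_fin_one] at h₀₀ h₀₁ h₁₁
  refine ⟨!![1, d, e; 0, C 0 0, C 0 1; 0, C 1 0, C 1 1], ?_⟩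
  ext i j
  fin_cases i <;> fin_cases j <;> simp [Matrix.mul_apply, Fin.sum_univ_three]
  all_goals linarith

theorem exists_det_eq_one_transpose_mul_mul_apply_zero_zero_lt (hQ : Q.PosDef)
    (hdet : Q.det = 1) (ha : 2 ≤ Q 0 0) :
    ∃ U : Matrix (Fin 3) (Fin 3) ℤ, U.det = 1 ∧ (Uᵀ * Q * U) 0 0 < Q 0 0 := by
  obtain ⟨a, b, c, d, e, f, rfl⟩ := (isHermitian_iff_isSymm.1 hQ.isHermitian).exists_eq_fin_three
  simp only [of_apply, cons_val', cons_val_zero, cons_val_fin_one] at ha ⊢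
  have hS₀₀ : 0 < a * b - d ^ 2 := by
    have h := hQ.dotProduct_mulVec_pos (x := ![-d, a, 0]) (by simp; omega)
    simp [dotProduct, mulVec, Fin.sum_univ_three] at h
    nlinarith
  -- `S` is the binary form `a Q(x, y, z) - (a x + d y + e z)²` in the variables `y, z`
  set S : Matrix (Fin 2) (Fin 2) ℤ := !![a * b - d ^ 2, a * f - d * e; a * f - d * e, a * c - e ^ 2]
  have hS : S.IsSymm := by ext i j; fin_cases i <;> fin_cases j <;> rfl
  have hSdet : S.det = a := by
    simp [S, det_fin_two, det_fin_three] at hdet ⊢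
    linear_combination a * hdet
  obtain ⟨V, hV, hVpos, hVle⟩ :=
    exists_three_mul_sq_le_four_mul_det_fin_two hS (by simpa [S] using hS₀₀) (by omega)
  obtain ⟨p, q, r, s, rfl⟩ : ∃ p q r s, V = !![p, q; r, s] := ⟨_, _, _, _, eta_fin_two V⟩
  obtain ⟨j, hj⟩ := Int.exists_four_mul_sq_sub_mul_le a (d * p + e * r) (by omega)
  refine ⟨!![-j, 0, 1; p, q, 0; r, s, 0], by simpa [det_fin_three, det_fin_two] using hV, ?_⟩
  set A := (!![p, q; r, s]ᵀ * S * !![p, q; r, s]) 0 0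
  set Qv := (!![-j, 0, 1; p, q, 0; r, s, 0]ᵀ * !![a, d, e; d, b, f; e, f, c] *
    !![-j, 0, 1; p, q, 0; r, s, 0]) 0 0
  have key : a * Qv = (d * p + e * r - j * a) ^ 2 + A := by
    simp [Qv, A, S, Matrix.mul_apply, Fin.sum_univ_three, Fin.sum_univ_two]
    ring
  rw [hSdet] at hVle
  -- if `Qv ≥ a` then `3a² ≤ 4A`, hence `9a⁴ ≤ 16A² ≤ 64a/3`, which fails for `a ≥ 2`
  by_contra! hge
  have h1 : 3 * a ^ 2 ≤ 4 * A := by nlinarith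
  nlinarith

theorem exists_eq_transpose_mul_self_fin_three (hQ : Q.PosDef) (hdet : Q.det = 1) :
    ∃ P : Matrix (Fin 3) (Fin 3) ℤ, Q = Pᵀ * P := by
  induction hN : (Q 0 0).toNat using Nat.strong_induction_on generalizing Q with
  | _ N ih =>
  have ha : 0 < Q 0 0 := hQ.diag_pos
  obtain ha1 | ha2 := (show Q 0 0 = 1 ∨ 2 ≤ Q 0 0 by omega)
  · exact exists_eq_transpose_mul_self_fin_three_of_apply_zero_zero_eq_one hQ hdet ha1
  · obtain ⟨U, hU, hlt⟩ := exists_det_eq_one_transpose_mul_mul_apply_zero_zero_lt hQ hdet ha2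
    have hQ' := hQ.transpose_mul_mul_of_det_eq_one hU
    obtain ⟨P, hP⟩ := ih _ (by have := hQ'.diag_pos (i := 0); omega) hQ'
      (by rw [det_transpose_mul_mul_of_det_eq_one hU, hdet]) rfl
    exact exists_eq_transpose_mul_self_of_transpose_mul_mul hU hP

end FinThree

end Matrix

open ZMod

theorem jacobiSym_neg_eq_one_of_dvd_add_one {p D : ℕ} (hp : p % 4 = 1) (hD : D % 4 = 1)
    (hdvd : D ∣ p + 1) : jacobiSym (-D) p = 1 := by
  have hp2 : Odd p := Nat.odd_iff.2 (by omega)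
  have hD2 : Odd D := Nat.odd_iff.2 (by omega)
  have hpD : jacobiSym p D = jacobiSym (-1) D := by
    refine jacobiSym.mod_left' (Int.modEq_iff_dvd.2 ?_)
    rw [show (-1 : ℤ) - p = -((p + 1 : ℕ) : ℤ) by push_cast; ring]
    exact (Int.natCast_dvd_natCast.2 hdvd).neg_right
  rw [neg_eq_neg_one_mul, jacobiSym.mul_left, jacobiSym.at_neg_one hp2, χ₄_nat_one_mod_four hp,
    jacobiSym.quadratic_reciprocity_one_mod_four hD hp2, hpD, jacobiSym.at_neg_one hD2,
    χ₄_nat_one_mod_four hD, one_mul]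

theorem jacobiSym_neg_eq_one_of_dvd_two_mul_add_one {p D : ℕ} (hp : Odd p)
    (hD : D % 8 = 1 ∨ D % 8 = 3) (hpD : p % 4 = 1 ∨ D % 4 = 3) (hdvd : D ∣ 2 * p + 1) :
    jacobiSym (-D) p = 1 := by
  have hD2 : Odd D := Nat.odd_iff.2 (by omega)
  have hpD : jacobiSym p D = 1 := by
    have h : jacobiSym (2 * p) D = jacobiSym (-1) D := by
      refine jacobiSym.mod_left' (Int.modEq_iff_dvd.2 ?_)
      rw [show (-1 : ℤ) - 2 * p = -((2 * p + 1 : ℕ) : ℤ) by push_cast; ring]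
      exact (Int.natCast_dvd_natCast.2 hdvd).neg_right
    have h8 : χ₈ D = χ₄ D := by
      rw [χ₈_nat_eq_if_mod_eight, χ₄_nat_eq_if_mod_four]
      split_ifs <;> omega
    have h0 : χ₄ D ≠ 0 := by rw [χ₄_nat_eq_if_mod_four]; split_ifs <;> omega
    rw [jacobiSym.mul_left, jacobiSym.at_two hD2, jacobiSym.at_neg_one hD2, h8] at h
    exact mul_left_cancel₀ h0 (h.trans (mul_one _).symm)
  rcases Nat.odd_mod_four_iff.1 (Nat.odd_iff.1 hp) with hp4 | hp4
  · rw [neg_eq_neg_one_mul, jacobiSym.mul_left, jacobiSym.at_neg_one hp, χ₄_nat_one_mod_four hp4,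
      jacobiSym.quadratic_reciprocity_one_mod_four' hD2 hp4, hpD, one_mul]
  · have hD4 : D % 4 = 3 := by omega
    rw [neg_eq_neg_one_mul, jacobiSym.mul_left, jacobiSym.at_neg_one hp, χ₄_nat_three_mod_four hp4,
      jacobiSym.quadratic_reciprocity_three_mod_four hD4 hp4, hpD]
    norm_num

theorem exists_odd_sq_add_dvd_of_jacobiSym_neg_eq_one {p : ℕ} [Fact p.Prime] (hp : Odd p)
    {a : ℤ} (h : jacobiSym (-a) p = 1) : ∃ β : ℤ, Odd β ∧ (p : ℤ) ∣ β ^ 2 + a := by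
  obtain ⟨b, hb⟩ := ZMod.isSquare_of_jacobiSym_eq_one h
  have hdvd : (p : ℤ) ∣ (b.val : ℤ) ^ 2 + a := by
    rw [← ZMod.intCast_zmod_eq_zero_iff_dvd]
    push_cast at hb ⊢
    rw [ZMod.natCast_val, ZMod.cast_id, sq, ← hb]
    ring
  rcases Int.even_or_odd (b.val : ℤ) with heven | hodd
  · refine ⟨b.val + p, heven.add_odd (by exact_mod_cast hp), ?_⟩
    rw [show ((b.val : ℤ) + p) ^ 2 + a = (b.val ^ 2 + a) + p * (2 * b.val + p) by ring]
    exact dvd_add hdvd (dvd_mul_right _ _)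
  · exact ⟨b.val, hodd, hdvd⟩

theorem Nat.exists_prime_add_one_eq_mul_of_mod_four_eq_two {n : ℕ} (hn : n % 4 = 2) :
    ∃ p D : ℕ, p.Prime ∧ p % 4 = 1 ∧ D % 4 = 1 ∧ n * D = p + 1 := by
  have hcop : (n - 1).Coprime (4 * n) := by
    refine Nat.Coprime.mul_right ?_ ?_
    · exact Nat.Coprime.pow_right 2 (Nat.coprime_two_right.2 (Nat.odd_iff.2 (by omega)))
    · exact (Nat.coprime_self_sub_left (by omega)).2 (Nat.coprime_one_left n)
  obtain ⟨p, hpn, hp, hmod⟩ := Nat.forall_exists_prime_gt_and_modEq n (by omega) hcop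
  obtain ⟨k, hk⟩ := (Nat.modEq_iff_dvd' (by omega)).1 hmod.symm
  have hp' : p = n - 1 + 4 * (n * k) := by rw [← mul_assoc, ← hk]; omega
  refine ⟨p, 1 + 4 * k, hp, by omega, by omega, ?_⟩
  rw [mul_add, mul_left_comm]
  omega

theorem Nat.exists_prime_two_mul_add_one_eq_mul_of_odd {n : ℕ} (hn : n % 2 = 1) (h7 : n % 8 ≠ 7) :
    ∃ p D : ℕ, p.Prime ∧ Odd p ∧ (D % 8 = 1 ∨ D % 8 = 3) ∧ (p % 4 = 1 ∨ D % 4 = 3) ∧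
      n * D = 2 * p + 1 := by
  obtain ⟨d, hd, hnd, hnd4⟩ :
      ∃ d : ℕ, (d = 1 ∨ d = 3) ∧ (d = 3 ∨ n * d % 8 = 3) ∧ n * d % 4 = 3 := by
    by_cases h3 : n % 8 = 3
    · exact ⟨1, by omega, by omega, by omega⟩
    · exact ⟨3, by omega, by omega, by omega⟩
  obtain ⟨c, hc⟩ : ∃ c, n * d = 2 * c + 1 := ⟨n * d / 2, by omega⟩
  have hc3 : c < 2 * n := by rcases hd with rfl | rfl <;> omega
  have hcop : c.Coprime (4 * n) := by
    refine Nat.Coprime.mul_right ?_ ?_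
    · exact Nat.Coprime.pow_right 2 (Nat.coprime_two_right.2 (Nat.odd_iff.2 (by omega)))
    · refine Nat.Coprime.coprime_mul_right_right (k := d) ?_
      rw [hc]
      exact (Nat.coprime_mul_right_add_right c 1 2).2 (Nat.coprime_one_right c)
  obtain ⟨p, hpn, hp, hmod⟩ := Nat.forall_exists_prime_gt_and_modEq (2 * n) (by omega) hcop
  obtain ⟨k, hk⟩ := (Nat.modEq_iff_dvd' (by omega)).1 hmod.symm
  have hp' : p = c + 4 * (n * k) := by rw [← mul_assoc, ← hk]; omega
  have hnD : n * (d + 8 * k) = 2 * p + 1 := by rw [mul_add, mul_left_comm]; omega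
  refine ⟨p, d + 8 * k, hp, hp.odd_of_ne_two (by omega), by omega, ?_, hnD⟩
  rcases hd with rfl | rfl <;> omega

theorem Int.exists_sum_three_sq_of_dvd_sq_add (n D β : ℤ) (hD : 0 < D) (hm : 0 < n * D - 1)
    (hdvd : n * D - 1 ∣ β ^ 2 + D) : ∃ x y z : ℤ, x ^ 2 + y ^ 2 + z ^ 2 = n := by
  obtain ⟨r, hr⟩ := hdvd
  set Q : Matrix (Fin 3) (Fin 3) ℤ := !![r, -β, 1; -β, n * D - 1, 0; 1, 0, n]
  have hdet : Q.det = 1 := by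
    simp [Q, Matrix.det_fin_three]
    linear_combination -n * hr
  have hQ : Q.PosDef := by
    refine Matrix.posDef_fin_three_of_minors ?_ ?_ ?_ (by omega)
    · ext i j; fin_cases i <;> fin_cases j <;> rfl
    · simp [Q]; nlinarith [sq_nonneg β]
    · simp [Q]; nlinarith
  obtain ⟨P, hP⟩ := Matrix.exists_eq_transpose_mul_self_fin_three hQ hdet
  refine ⟨P 0 2, P 1 2, P 2 2, ?_⟩
  have h := congrFun (congrFun hP 2) 2
  simp [Q, Matrix.mul_apply, Fin.sum_univ_three] at h
  linear_combination -h

theorem Nat.exists_sum_three_sq_of_mod_four_eq_two {n : ℕ} (hn : n % 4 = 2) :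
    ∃ x y z : ℤ, x ^ 2 + y ^ 2 + z ^ 2 = n := by
  obtain ⟨p, D, hp, hp4, hD4, hnD⟩ := Nat.exists_prime_add_one_eq_mul_of_mod_four_eq_two hn
  have := Fact.mk hp
  obtain ⟨β, -, hβ⟩ := exists_odd_sq_add_dvd_of_jacobiSym_neg_eq_one (Nat.odd_iff.2 (by omega))
    (jacobiSym_neg_eq_one_of_dvd_add_one hp4 hD4 ⟨n, by rw [← hnD, mul_comm]⟩)
  have hp' : (n : ℤ) * D - 1 = p := by rw [← Nat.cast_mul, hnD]; push_cast; ring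
  exact Int.exists_sum_three_sq_of_dvd_sq_add n D β (by omega) (by rw [hp']; exact_mod_cast hp.pos)
    (by rwa [hp'])

theorem Nat.exists_sum_three_sq_of_odd {n : ℕ} (hn : n % 2 = 1) (h7 : n % 8 ≠ 7) :
    ∃ x y z : ℤ, x ^ 2 + y ^ 2 + z ^ 2 = n := by
  obtain ⟨p, D, hp, hp2, hD8, hpD, hnD⟩ := Nat.exists_prime_two_mul_add_one_eq_mul_of_odd hn h7
  have := Fact.mk hp
  obtain ⟨β, hβ2, w, hw⟩ := exists_odd_sq_add_dvd_of_jacobiSym_neg_eq_one hp2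
    (jacobiSym_neg_eq_one_of_dvd_two_mul_add_one hp2 hD8 hpD ⟨n, by rw [← hnD, mul_comm]⟩)
  have hp' : (n : ℤ) * D - 1 = 2 * p := by rw [← Nat.cast_mul, hnD]; push_cast; ring
  -- `β ^ 2 + D` is even and `p` is odd, so `2 p ∣ β ^ 2 + D`
  obtain ⟨v, rfl⟩ : Even w := by
    have heven : Even ((p : ℤ) * w) :=
      hw ▸ (hβ2.pow).add_odd (by exact_mod_cast Nat.odd_iff.2 (by omega))
    exact (Int.even_mul.1 heven).resolve_left (by exact_mod_cast Nat.not_even_iff_odd.2 hp2)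
  exact Int.exists_sum_three_sq_of_dvd_sq_add n D β (by omega) (by rw [hp']; have := hp.pos; omega)
    ⟨v, by rw [hp', hw]; ring⟩

theorem Nat.exists_sum_three_sq (n : ℕ) (h : ∀ l k : ℕ, n ≠ 4 ^ l * (8 * k + 7)) :
    ∃ x y z : ℤ, x ^ 2 + y ^ 2 + z ^ 2 = n := by
  induction n using Nat.strong_induction_on with
  | _ n ih =>
  rcases Nat.eq_zero_or_pos n with rfl | hn
  · exact ⟨0, 0, 0, by simp⟩
  by_cases h4 : n % 4 = 0
  · obtain ⟨x, y, z, hxyz⟩ := ih (n / 4) (by omega) fun l k hlk =>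
      h (l + 1) k (by rw [pow_succ, mul_comm _ 4, mul_assoc]; omega)
    refine ⟨2 * x, 2 * y, 2 * z, ?_⟩
    rw [show (n : ℤ) = 4 * (n / 4 : ℕ) by omega, ← hxyz]
    ring
  · rcases (show n % 4 = 2 ∨ n % 2 = 1 by omega) with h2 | h1
    · exact Nat.exists_sum_three_sq_of_mod_four_eq_two h2
    · exact Nat.exists_sum_three_sq_of_odd h1 fun h7 => h 0 (n / 8) (by omega)

def signedPerms {R : Type*} [Neg R] (v : R × R × R) : List (R × R × R) :=
  [(v.1, v.2.1, v.2.2), (v.1, v.2.2, v.2.1), (v.2.1, v.1, v.2.2), (v.2.1, v.2.2, v.1),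
    (v.2.2, v.1, v.2.1), (v.2.2, v.2.1, v.1)].flatMap fun w =>
    [(w.1, w.2.1, w.2.2), (w.1, w.2.1, -w.2.2), (w.1, -w.2.1, w.2.2), (w.1, -w.2.1, -w.2.2),
     (-w.1, w.2.1, w.2.2), (-w.1, w.2.1, -w.2.2), (-w.1, -w.2.1, w.2.2), (-w.1, -w.2.1, -w.2.2)]

theorem sum_sq_of_mem_signedPerms {R : Type*} [CommRing R] {v w : R × R × R}
    (h : w ∈ signedPerms v) :
    w.1 ^ 2 + w.2.1 ^ 2 + w.2.2 ^ 2 = v.1 ^ 2 + v.2.1 ^ 2 + v.2.2 ^ 2 := by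
  simp only [signedPerms, List.mem_flatMap, List.mem_cons, List.not_mem_nil, or_false] at h
  obtain ⟨w', hw', hw⟩ := h
  rcases hw' with rfl | rfl | rfl | rfl | rfl | rfl <;>
    rcases hw with rfl | rfl | rfl | rfl | rfl | rfl | rfl | rfl <;> ring

theorem signedPerms_map {R S : Type*} [Ring R] [Ring S] (f : R →+* S) (v : R × R × R) :
    signedPerms (f v.1, f v.2.1, f v.2.2) =
      (signedPerms v).map fun w => (f w.1, f w.2.1, f w.2.2) := by
  simp [signedPerms]

theorem ZMod.exists_mem_signedPerms_of_sum_sq_eq_three_mul_sq :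
    ∀ t r s u : ZMod 7, r ^ 2 + s ^ 2 + u ^ 2 = 3 * t ^ 2 →
      ∃ w ∈ signedPerms (r, s, u), w.2.2 = 4 * w.1 + 2 * w.2.1 ∧ 6 * w.1 + 2 * w.2.1 = -t := by
  decide

theorem Int.exists_mem_signedPerms_of_seven_dvd (t r s u : ℤ)
    (h : (7 : ℤ) ∣ r ^ 2 + s ^ 2 + u ^ 2 - 3 * t ^ 2) :
    ∃ w ∈ signedPerms (r, s, u), (7 : ℤ) ∣ w.2.2 - 4 * w.1 - 2 * w.2.1 ∧
      (7 : ℤ) ∣ 6 * w.1 + 2 * w.2.1 + t := by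
  set f := Int.castRingHom (ZMod 7)
  have h7 : f r ^ 2 + f s ^ 2 + f u ^ 2 = 3 * f t ^ 2 := by
    have := (ZMod.intCast_zmod_eq_zero_iff_dvd _ 7).2 (by exact_mod_cast h)
    push_cast at this
    simp only [f, eq_intCast]
    linear_combination this
  obtain ⟨w, hw, h₁, h₂⟩ := ZMod.exists_mem_signedPerms_of_sum_sq_eq_three_mul_sq _ _ _ _ h7
  rw [show (f r, f s, f u) = (f (r, s, u).1, f (r, s, u).2.1, f (r, s, u).2.2) from rfl,
    signedPerms_map, List.mem_map] at hw
  obtain ⟨w, hw, rfl⟩ := hw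
  simp only [f, eq_intCast] at h₁ h₂
  refine ⟨w, hw, ?_, ?_⟩ <;> refine mod_cast (ZMod.intCast_zmod_eq_zero_iff_dvd _ 7).1 ?_ <;>
    push_cast
  · linear_combination h₁
  · linear_combination h₂

theorem Int.exists_sq_add_two_mul_sq_eq (n t r s u : ℤ)
    (h : 2 * (r ^ 2 + s ^ 2 + u ^ 2) = 7 * n - t ^ 2) :
    ∃ y₁ y₂ y₃ y₄ : ℤ, y₁ ^ 2 + 2 * y₂ ^ 2 + 2 * y₃ ^ 2 + 2 * y₄ ^ 2 = n ∧
      y₁ + 2 * y₂ + 2 * y₃ + 2 * y₄ = t := by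
  obtain ⟨⟨a, b, c⟩, hw, h₁, h₂⟩ := Int.exists_mem_signedPerms_of_seven_dvd t r s u
    ⟨4 * n - t ^ 2 - (r ^ 2 + s ^ 2 + u ^ 2), by linear_combination 4 * h⟩
  have habc := sum_sq_of_mem_signedPerms hw
  simp only at h₁ h₂ habc
  -- `y₂, y₃, y₄` are `(t + L)/7` for `L = (2a + c, -a + 2b, -b - 2c)`, which satisfies
  -- `L₁² + L₂² + L₃² + 2 (L₁ + L₂ + L₃)² = 7 (a² + b² + c²)`
  obtain ⟨y₂, hy₂⟩ : (7 : ℤ) ∣ t + (2 * a + c) := by omega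
  obtain ⟨y₃, hy₃⟩ : (7 : ℤ) ∣ t + (-a + 2 * b) := by omega
  obtain ⟨y₄, hy₄⟩ : (7 : ℤ) ∣ t + (-b - 2 * c) := by omega
  refine ⟨t - 2 * (y₂ + y₃ + y₄), y₂, y₃, y₄, ?_, by ring⟩
  have h49 : 49 * ((t - 2 * (y₂ + y₃ + y₄)) ^ 2 + 2 * y₂ ^ 2 + 2 * y₃ ^ 2 + 2 * y₄ ^ 2) =
      49 * n := by
    linear_combination
      2 * (hy₂ + hy₃ + hy₄) * (7 * (t - 2 * (y₂ + y₃ + y₄)) + t - 2 * (a + b - c))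
      - 2 * hy₂ * (7 * y₂ + t + (2 * a + c)) - 2 * hy₃ * (7 * y₃ + t + (-a + 2 * b))
      - 2 * hy₄ * (7 * y₄ + t + (-b - 2 * c)) + 14 * habc + 7 * h
  linarith

theorem Int.odd_of_sq_add_two_mul_sq_emod_eight {y₁ y₂ y₃ y₄ : ℤ}
    (h : (y₁ ^ 2 + 2 * y₂ ^ 2 + 2 * y₃ ^ 2 + 2 * y₄ ^ 2) % 8 = 7) :
    Odd y₁ ∧ Odd y₂ ∧ Odd y₃ ∧ Odd y₄ := by
  have key : ∀ a b c d : ZMod 8, a ^ 2 + 2 * b ^ 2 + 2 * c ^ 2 + 2 * d ^ 2 = 7 →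
      a.val % 2 = 1 ∧ b.val % 2 = 1 ∧ c.val % 2 = 1 ∧ d.val % 2 = 1 := by
    decide
  have hodd : ∀ y : ℤ, (y : ZMod 8).val % 2 = 1 → Odd y := fun y hy => by
    have := ZMod.val_intCast (n := 8) y
    rw [Int.odd_iff]
    omega
  have h8 : ((y₁ ^ 2 + 2 * y₂ ^ 2 + 2 * y₃ ^ 2 + 2 * y₄ ^ 2 : ℤ) : ZMod 8) = ((7 : ℤ) : ZMod 8) :=
    (ZMod.intCast_eq_intCast_iff' _ _ 8).2 (by simpa using h)
  push_cast at h8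
  obtain ⟨h₁, h₂, h₃, h₄⟩ := key _ _ _ _ h8
  exact ⟨hodd _ h₁, hodd _ h₂, hodd _ h₃, hodd _ h₄⟩

theorem two_mul_polygonal (m x : ℤ) : 2 * polygonal m x = (m - 2) * x ^ 2 - (m - 4) * x := by
  refine Int.mul_ediv_cancel' ?_
  obtain ⟨k, hk⟩ := Int.even_mul_succ_self (x - 1)
  exact ⟨(m - 2) * k + x, by linear_combination (m - 2) * hk⟩

theorem exists_polygonal_eq_of_sq_add_two_mul_sq_eq (m A B y₁ y₂ y₃ y₄ : ℤ)
    (hQ : y₁ ^ 2 + 2 * y₂ ^ 2 + 2 * y₃ ^ 2 + 2 * y₄ ^ 2 = 8 * A + 7)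
    (hℓ : y₁ + 2 * y₂ + 2 * y₃ + 2 * y₄ = 2 * B - 7) :
    ∃ x₁ x₂ x₃ x₄ : ℤ,
      polygonal m x₁ + 2 * polygonal m x₂ + 2 * polygonal m x₃ + 2 * polygonal m x₄ =
        A * (m - 2) + B := by
  obtain ⟨⟨k₁, rfl⟩, ⟨k₂, rfl⟩, ⟨k₃, rfl⟩, ⟨k₄, rfl⟩⟩ :=
    Int.odd_of_sq_add_two_mul_sq_emod_eight (y₁ := y₁) (y₂ := y₂) (y₃ := y₃) (y₄ := y₄) (by omega)
  refine ⟨k₁ + 1, k₂ + 1, k₃ + 1, k₄ + 1, mul_left_cancel₀ (two_ne_zero' ℤ) ?_⟩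
  have hℓx : k₁ + 1 + 2 * (k₂ + 1) + 2 * (k₃ + 1) + 2 * (k₄ + 1) = B := by linarith
  have hQx : (k₁ + 1) ^ 2 + 2 * (k₂ + 1) ^ 2 + 2 * (k₃ + 1) ^ 2 + 2 * (k₄ + 1) ^ 2 = 2 * A + B := by
    linarith
  have h := two_mul_polygonal m
  linear_combination h (k₁ + 1) + 2 * h (k₂ + 1) + 2 * h (k₃ + 1) + 2 * h (k₄ + 1) +
    (m - 2) * hQx + (4 - m) * hℓx

theorem rep_1222_general (m : ℤ) (A B : ℤ)
    (hd : 0 ≤ 14 * A + 7 * B - B ^ 2)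
    (hform : ∀ l k : ℕ, 14 * A + 7 * B - B ^ 2 ≠ 2 * (4 : ℤ) ^ l * (8 * (k : ℤ) + 7)) :
    ∃ x₁ x₂ x₃ x₄ : ℤ,
      polygonal m x₁ + 2 * polygonal m x₂ + 2 * polygonal m x₃ + 2 * polygonal m x₄ =
        A * (m - 2) + B := by
  set N := 14 * A + 7 * B - B ^ 2
  have h2N : ∀ l k : ℕ, (2 * N).toNat ≠ 4 ^ l * (8 * k + 7) := by
    intro l k h
    replace h : 2 * N = 4 ^ l * (8 * k + 7) := by
      rw [← Int.toNat_of_nonneg (show 0 ≤ 2 * N by omega), h]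
      push_cast
      ring
    rcases l with _ | l
    · omega
    · exact hform l k (by rw [pow_succ'] at h; linarith)
  obtain ⟨r, s, u, hrsu⟩ := Nat.exists_sum_three_sq _ h2N
  rw [Int.toNat_of_nonneg (by omega)] at hrsu
  obtain ⟨y₁, y₂, y₃, y₄, hQ, hℓ⟩ :=
    Int.exists_sq_add_two_mul_sq_eq (8 * A + 7) (2 * B - 7) r s u (by rw [hrsu]; ring)
  exact exists_polygonal_eq_of_sq_add_two_mul_sq_eq m A B y₁ y₂ y₃ y₄ hQ hℓ

theorem rep_1222 (m : ℤ) (hm : 3 ≤ m) (A B : ℤ) (hA : 0 ≤ A)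
    (hd : 0 ≤ 14 * A + 7 * B - B ^ 2)
    (hform : ∀ l k : ℕ, 14 * A + 7 * B - B ^ 2 ≠ 2 * (4 : ℤ) ^ l * (8 * (k : ℤ) + 7)) :
    ∃ x₁ x₂ x₃ x₄ : ℤ,
      polygonal m x₁ + 2 * polygonal m x₂ + 2 * polygonal m x₃ + 2 * polygonal m x₄ =
        A * (m - 2) + B :=
  rep_1222_general m A B hd hform
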